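/- arXiv:1803.06482 — 2 statements merged into one kernel-verified Lean document; each statement's English description precedes it below -/
import Mathlib

section
/- (Correctness of the distributed logic-AND, necessity direction.) In the asynchronous logic-AND algorithm on a connected graph of diameter d_G, suppose node i reaches the state Π_{b=1}^{d_i} S_i[d_G, b] = 1 at some time. Then at some earlier time every node j in the graph had its flag C_j = 1. Formally: model the state S_i[l, ·] so that S_i[1, j] records the most recently communicated flag value C_j of neighbor j, and S_i[l, d_i] = Π_b S_i[l−1, b] with S_j[l, d_j] communicated to neighbors; if flags are monotone (once 1, always 1) and initialized to 0, then S_i[l, d_i] = 1 at time t implies C_j = 1 at some time ≤ t for every node j within graph distance l − 1 of node i. -/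
/-- logic-AND, necessity.  `S t i l j` models the entry of the
    stopping matrix of node `i` at (discrete, universal) time `t`, in row `l`
    and in the column associated with neighbor `j` (`S t i l i` is node `i`'s
    own column `S_i[l, d_i]`).  `C t j` is node `j`'s flag at time `t`.
    Row 1 records (previously communicated) flag values, and for `l ≥ 2` the
    entry in column `j` records a (previously computed) product of row `l−1`
    of node `j`'s matrix over the closed neighborhood of `j`.
    Then `S_i[l, d_i] = 1` at time `t` implies that every node `j` within graph
    distance `l − 1` of `i` had `C_j = 1` at some time ≤ t. -/
theorem stmt10 {N : ℕ} (G : SimpleGraph (Fin N)) (hconn : G.Connected)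
    (S : ℕ → Fin N → ℕ → Fin N → Prop)
    (C : ℕ → Fin N → Prop)
    -- flags are monotone: once 1, always 1
    (hmono : ∀ t j, C t j → C (t + 1) j)
    -- row 1 soundness: a recorded flag value reflects a true flag at an earlier time
    (hrow1 : ∀ t i j, j ∈ insert i {b | G.Adj i b} → S t i 1 j →
        ∃ t' ≤ t, C t' j)
    -- rows l ≥ 2 soundness: a recorded entry in column j reflects the product of
    -- row l−1 of node j's matrix at an earlier time
    (hrow : ∀ t i j l, j ∈ insert i {b | G.Adj i b} → 2 ≤ l → S t i l j →
        ∃ t' ≤ t, ∀ b ∈ insert j {b | G.Adj j b}, S t' j (l - 1) b) :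
    ∀ (l : ℕ), 1 ≤ l → ∀ (t : ℕ) (i : Fin N), S t i l i →
      ∀ j : Fin N, G.dist i j ≤ l - 1 → ∃ t' ≤ t, C t' j := by
  suffices H : ∀ (l : ℕ), 1 ≤ l → ∀ (t : ℕ) (i b : Fin N),
      b ∈ insert i {b | G.Adj i b} → S t i l b →
      ∀ j : Fin N, G.dist b j ≤ l - 1 → ∃ t' ≤ t, C t' j by
    intro l hl t i hS j hj
    exact H l hl t i i (Set.mem_insert i _) hS j hj
  intro l
  induction l with
  | zero => intro h; omega
  | succ l ih =>
    intro _ t i b hb hS j hj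
    rcases Nat.eq_or_lt_of_le (Nat.one_le_iff_ne_zero.mpr (by omega) : 1 ≤ l + 1) with h1 | h2
    · -- l = 0, row 1
      have hl0 : l = 0 := by omega
      subst hl0
      have : j = b := by
        have h0 : G.dist b j = 0 := by omega
        exact (hconn.dist_eq_zero_iff.mp h0).symm
      subst this
      exact hrow1 t i j hb hS
    · -- l ≥ 1
      have hl1 : 1 ≤ l := by omega
      obtain ⟨t', ht', hall⟩ := hrow t i b (l + 1) hb (by omega) hS
      -- find c ∈ N[b] with dist c j ≤ l - 1
      have hbj : G.dist b j ≤ l := by omega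
      by_cases hjb : j = b
      · obtain ⟨t'', ht'', hC⟩ := ih hl1 t' b b (Set.mem_insert b _)
          (hall b (Set.mem_insert b _)) j (by
            rw [hjb, hconn.dist_eq_zero_iff.mpr rfl]; omega)
        exact ⟨t'', le_trans ht'' ht', hC⟩
      · obtain ⟨p, hp⟩ := hconn.exists_walk_length_eq_dist b j
        rcases p with _ | ⟨hadj, p'⟩
        · exact absurd rfl (Ne.symm hjb)
        · rename_i c
          have hdc : G.dist c j ≤ l - 1 := by
            have h1 : G.dist c j ≤ p'.length := SimpleGraph.dist_le p'
            have h2 : p'.length + 1 = G.dist b j := by simpa using hp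
            omega
          obtain ⟨t'', ht'', hC⟩ := ih hl1 t' b c (by right; exact hadj)
            (hall c (by right; exact hadj)) j hdc
          exact ⟨t'', le_trans ht'' ht', hC⟩
end

section
/- (Correctness of the distributed logic-AND, sufficiency direction.) In the asynchronous logic-AND algorithm on a connected graph of diameter d_G, if at some time instant C_j = 1 for every node j, and thereafter every node continues to awaken infinitely often (with bounded inter-awakening times), then within a finite number of awakenings some node i satisfies Π_{b=1}^{d_i} S_i[d_G, b] = 1. In particular, after every node has awakened d_G + 1 times following the time all flags became 1, the condition holds at every node. -/
section Aux

variable {N : ℕ} (G : SimpleGraph (Fin N))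
  (S : ℕ → Fin N → ℕ → Fin N → Prop)
  (C : ℕ → Fin N → Prop) (a : ℕ → Fin N)

/-- Global invariant: all rows `1 ≤ l ≤ k` are true at every node, both in its
own column and in its neighbors' columns. -/
def InvP (k t : ℕ) : Prop :=
  ∀ i, (∀ l, 1 ≤ l → l ≤ k → S t i l i) ∧
    (∀ l, 1 ≤ l → l ≤ k → ∀ b, G.Adj i b → S t i l b)

variable
  (hup1 : ∀ t, S (t + 1) (a t) 1 (a t) ↔ C t (a t))
  (hupl : ∀ t l, 2 ≤ l →
      (S (t + 1) (a t) l (a t) ↔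
        (S (t + 1) (a t) (l - 1) (a t) ∧
          ∀ b, G.Adj (a t) b → S t (a t) (l - 1) b)))
  (hcopy : ∀ t j l, G.Adj (a t) j → (S (t + 1) j l (a t) ↔ S (t + 1) (a t) l (a t)))
  (hfix1 : ∀ t k l m, m ≠ a t → (S (t + 1) k l m ↔ S t k l m))
  (T : ℕ) (hflag : ∀ t ≥ T, ∀ j, C t j)

include hup1 hupl hflag in
lemma awakeAll {k t : ℕ} (hT : T ≤ t) (hI : InvP G S k t) :
    ∀ l, 1 ≤ l → l ≤ k + 1 → S (t + 1) (a t) l (a t) := by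
  intro l
  induction l with
  | zero => omega
  | succ n ih =>
    intro _ hle
    rcases Nat.eq_zero_or_pos n with hn | hn
    · subst hn
      exact (hup1 t).mpr (hflag t hT (a t))
    · refine (hupl t (n + 1) (by omega)).mpr ⟨?_, ?_⟩
      · simpa using ih (by omega) (by omega)
      · intro b hb
        simpa using (hI (a t)).2 n (by omega) (by omega) b hb

include hup1 hupl hcopy hfix1 hflag in
lemma stepInv {k t : ℕ} (hT : T ≤ t) (hI : InvP G S k t) : InvP G S k (t + 1) := by
  intro i
  constructor
  · intro l h1 hk
    by_cases hi : i = a t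
    · subst hi
      exact awakeAll G S C a hup1 hupl T hflag hT hI l h1 (by omega)
    · exact (hfix1 t i l i hi).mpr ((hI i).1 l h1 hk)
  · intro l h1 hk b hb
    by_cases hb' : b = a t
    · subst hb'
      exact (hcopy t i l hb.symm).mpr
        (awakeAll G S C a hup1 hupl T hflag hT hI l h1 (by omega))
    · exact (hfix1 t i l b hb').mpr ((hI i).2 l h1 hk b hb)

include hup1 hupl hcopy hfix1 hflag in
lemma persistInv {k t t' : ℕ} (hT : T ≤ t) (ht : t ≤ t') (hI : InvP G S k t) :
    InvP G S k t' := by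
  induction t', ht using Nat.le_induction with
  | base => exact hI
  | succ u hu ih => exact stepInv G S C a hup1 hupl hcopy hfix1 T hflag (hT.trans hu) ih

include hup1 hupl hflag in
lemma awakeNew {k t : ℕ} (hT : T ≤ t) (hI : InvP G S k t) :
    S (t + 1) (a t) (k + 1) (a t) :=
  awakeAll G S C a hup1 hupl T hflag hT hI (k + 1) (by omega) le_rfl

include hup1 hupl hfix1 hflag in
lemma pown {k t : ℕ} (i : Fin N) (hT : T ≤ t) (hI : InvP G S k t)
    (h : S t i (k + 1) i) : S (t + 1) i (k + 1) i := by
  by_cases hi : i = a t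
  · subst hi
    exact awakeNew G S C a hup1 hupl T hflag hT hI
  · exact (hfix1 t i (k + 1) i hi).mpr h

include hup1 hupl hcopy hfix1 hflag in
lemma persistOwn {k s t' : ℕ} (i : Fin N) (hT : T ≤ s) (ht : s ≤ t')
    (hI : InvP G S k s) (h : S s i (k + 1) i) : S t' i (k + 1) i := by
  induction t', ht using Nat.le_induction with
  | base => exact h
  | succ u hu ih =>
    exact pown G S C a hup1 hupl hfix1 T hflag i (hT.trans hu)
      (persistInv G S C a hup1 hupl hcopy hfix1 T hflag hT hu hI) ih

/-- Intermediate invariant `J`. -/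
def JP (k t : ℕ) : Prop := InvP G S k t ∧ ∀ i, S t i (k + 1) i

include hup1 hupl hcopy hfix1 hflag in
lemma persistJ {k t t' : ℕ} (hT : T ≤ t) (ht : t ≤ t') (hJ : JP G S k t) :
    JP G S k t' := by
  induction t', ht using Nat.le_induction with
  | base => exact hJ
  | succ u hu ih =>
    exact ⟨stepInv G S C a hup1 hupl hcopy hfix1 T hflag (hT.trans hu) ih.1,
      fun i => pown G S C a hup1 hupl hfix1 T hflag i (hT.trans hu) ih.1 (ih.2 i)⟩

include hup1 hupl hcopy hfix1 hflag in
lemma pnbr {k t : ℕ} (i b : Fin N) (hadj : G.Adj i b) (hT : T ≤ t)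
    (hJ : JP G S k t) (h : S t i (k + 1) b) : S (t + 1) i (k + 1) b := by
  by_cases hb : b = a t
  · subst hb
    exact (hcopy t i (k + 1) hadj.symm).mpr
      (awakeNew G S C a hup1 hupl T hflag hT hJ.1)
  · exact (hfix1 t i (k + 1) b hb).mpr h

include hup1 hupl hcopy hfix1 hflag in
lemma persistNbr {k s t' : ℕ} (i b : Fin N) (hadj : G.Adj i b) (hT : T ≤ s)
    (ht : s ≤ t') (hJ : JP G S k s) (h : S s i (k + 1) b) :
    S t' i (k + 1) b := by
  induction t', ht using Nat.le_induction with
  | base => exact h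
  | succ u hu ih =>
    exact pnbr G S C a hup1 hupl hcopy hfix1 T hflag i b hadj (hT.trans hu)
      (persistJ G S C a hup1 hupl hcopy hfix1 T hflag hT hu hJ) ih

end Aux

lemma sweepLem {N : ℕ} (a : ℕ → Fin N)
    (hinf : ∀ (i : Fin N) (t : ℕ), ∃ t' ≥ t, a t' = i) (t0 : ℕ) :
    ∃ t1, t0 ≤ t1 ∧ ∀ i, ∃ s, t0 ≤ s ∧ s < t1 ∧ a s = i := by
  choose f hf1 hf2 using fun i => hinf i t0
  refine ⟨max t0 (Finset.univ.sup f + 1), le_max_left _ _, fun i => ⟨f i, hf1 i, ?_, hf2 i⟩⟩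
  have : f i ≤ Finset.univ.sup f := Finset.le_sup (Finset.mem_univ i)
  omega

section Key

variable {N : ℕ} (G : SimpleGraph (Fin N))
  (S : ℕ → Fin N → ℕ → Fin N → Prop)
  (C : ℕ → Fin N → Prop) (a : ℕ → Fin N)
  (hinf : ∀ (i : Fin N) (t : ℕ), ∃ t' ≥ t, a t' = i)
  (hup1 : ∀ t, S (t + 1) (a t) 1 (a t) ↔ C t (a t))
  (hupl : ∀ t l, 2 ≤ l →
      (S (t + 1) (a t) l (a t) ↔
        (S (t + 1) (a t) (l - 1) (a t) ∧
          ∀ b, G.Adj (a t) b → S t (a t) (l - 1) b)))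
  (hcopy : ∀ t j l, G.Adj (a t) j → (S (t + 1) j l (a t) ↔ S (t + 1) (a t) l (a t)))
  (hfix1 : ∀ t k l m, m ≠ a t → (S (t + 1) k l m ↔ S t k l m))
  (T : ℕ) (hflag : ∀ t ≥ T, ∀ j, C t j)

include hinf hup1 hupl hcopy hfix1 hflag in
lemma keyLem : ∀ k, ∃ t, T ≤ t ∧ InvP G S k t := by
  intro k
  induction k with
  | zero =>
    exact ⟨T, le_rfl, fun i =>
      ⟨fun l h1 h0 => absurd (h1.trans h0) (by omega),
       fun l h1 h0 => absurd (h1.trans h0) (by omega)⟩⟩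
  | succ k ih =>
    obtain ⟨t, hTt, hI⟩ := ih
    obtain ⟨t1, ht1, hs1⟩ := sweepLem a hinf t
    have hJ : JP G S k t1 := by
      refine ⟨persistInv G S C a hup1 hupl hcopy hfix1 T hflag hTt ht1 hI, fun i => ?_⟩
      obtain ⟨s, hts, hst1, has⟩ := hs1 i
      have hIs := persistInv G S C a hup1 hupl hcopy hfix1 T hflag hTt hts hI
      have h1 : S (s + 1) i (k + 1) i := by
        have := awakeNew G S C a hup1 hupl T hflag (hTt.trans hts) hIs
        rwa [has] at this
      exact persistOwn G S C a hup1 hupl hcopy hfix1 T hflag i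
        (by omega) (by omega)
        (stepInv G S C a hup1 hupl hcopy hfix1 T hflag (hTt.trans hts) hIs) h1
    obtain ⟨t2, ht2, hs2⟩ := sweepLem a hinf t1
    have hJ2 := persistJ G S C a hup1 hupl hcopy hfix1 T hflag (hTt.trans ht1) ht2 hJ
    refine ⟨t2, by omega, fun i => ⟨?_, ?_⟩⟩
    · intro l h1 hk
      rcases Nat.lt_or_ge l (k + 1) with hl | hl
      · exact (hJ2.1 i).1 l h1 (by omega)
      · have : l = k + 1 := by omega
        subst this
        exact hJ2.2 i
    · intro l h1 hk b hb
      rcases Nat.lt_or_ge l (k + 1) with hl | hl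
      · exact (hJ2.1 i).2 l h1 (by omega) b hb
      · have : l = k + 1 := by omega
        subst this
        obtain ⟨s, hts, hst2, has⟩ := hs2 b
        have hJs := persistJ G S C a hup1 hupl hcopy hfix1 T hflag (hTt.trans ht1) hts hJ
        have hcopied : S (s + 1) i (k + 1) b := by
          have hadj : G.Adj (a s) i := by rw [has]; exact hb.symm
          have := (hcopy s i (k + 1) hadj).mpr
            (awakeNew G S C a hup1 hupl T hflag (by omega) hJs.1)
          rwa [has] at this
        exact persistNbr G S C a hup1 hupl hcopy hfix1 T hflag i b hb
          (by omega) (by omega)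
          (persistJ G S C a hup1 hupl hcopy hfix1 T hflag (by omega) (Nat.le_succ s) hJs)
          hcopied

end Key



/-- logic-AND, sufficiency.  `S t i l j` is the entry of node
    `i`'s stopping matrix at time `t`, row `l`, column of neighbor `j`
    (`S t i l i` is node `i`'s own column `S_i[l, d_i]`); `C t j` is node `j`'s
    flag; `a t` is the (unique) node awake at time `t` and every node awakens
    infinitely often.  Upon awakening, node `i = a t` sets its own column by
    `S_i[1,d_i] ← C_i` and `S_i[l,d_i] ← Π_b S_i[l−1,b]` (rows computed in
    order), broadcasts it to its neighbors which copy it, and all other entries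
    stay unchanged.  If from time `T` on all flags are 1, then at some finite
    time `t ≥ T` every node `i` satisfies `Π_{b=1}^{d_i} S_i[d_G, b] = 1`. -/
theorem stmt11 {N : ℕ} (G : SimpleGraph (Fin N)) (hconn : G.Connected)
    (dG : ℕ) (hdG : 1 ≤ dG) (hdiam : ∀ u v : Fin N, G.dist u v ≤ dG)
    (S : ℕ → Fin N → ℕ → Fin N → Prop)
    (C : ℕ → Fin N → Prop)
    (a : ℕ → Fin N)
    -- every node awakens infinitely often
    (hinf : ∀ (i : Fin N) (t : ℕ), ∃ t' ≥ t, a t' = i)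
    -- awake node i = a t recomputes its own column, rows in order:
    (hup1 : ∀ t, S (t + 1) (a t) 1 (a t) ↔ C t (a t))
    (hupl : ∀ t l, 2 ≤ l →
      (S (t + 1) (a t) l (a t) ↔
        (S (t + 1) (a t) (l - 1) (a t) ∧
          ∀ b, G.Adj (a t) b → S t (a t) (l - 1) b)))
    -- neighbors copy the broadcast column of the awake node:
    (hcopy : ∀ t j l, G.Adj (a t) j → (S (t + 1) j l (a t) ↔ S (t + 1) (a t) l (a t)))
    -- all other entries are unchanged:
    (hfix1 : ∀ t k l m, m ≠ a t → (S (t + 1) k l m ↔ S t k l m))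
    (hfix2 : ∀ t k l, k ≠ a t → ¬ G.Adj (a t) k → (S (t + 1) k l (a t) ↔ S t k l (a t)))
    -- from time T on, every flag is 1:
    (T : ℕ) (hflag : ∀ t ≥ T, ∀ j, C t j) :
    ∃ t ≥ T, ∀ i : Fin N, S t i dG i ∧ ∀ b, G.Adj i b → S t i dG b := by
  obtain ⟨t, hT, hI⟩ := keyLem G S C a hinf hup1 hupl hcopy hfix1 T hflag dG
  exact ⟨t, hT, fun i => ⟨(hI i).1 dG hdG le_rfl, fun b hb => (hI i).2 dG hdG le_rfl b hb⟩⟩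
end
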